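/- Let E be a real normed vector space, Θ ⊆ E a nonempty closed convex set, and f₁, …, f_N : E → ℝ functions each of which is CSN with smoothness β > 0. Let θ₁, …, θ_N ∈ Θ, let ε̂ = (1/N) inf_{θ ∈ Θ} Σ_{n=1}^N f_n(θ), and let Ê ≥ ε̂. Define the linearized regret Regret(⟨f_n′(θ_n), ·⟩) := Σ_{n=1}^N f_n′(θ_n)(θ_n) − inf_{θ ∈ Θ} Σ_{n=1}^N f_n′(θ_n)(θ). Let R > 0 and K > 0, and assume that for every η > 0, Regret(f_n) ≤ Regret(⟨f_n′(θ_n), ·⟩) and Regret(⟨f_n′(θ_n), ·⟩) ≤ K(R²/η + (η/2) Σ_{n=1}^N ‖f_n′(θ_n)‖²). Then Regret(⟨f_n′(θ_n), ·⟩) ≤ 8K²βR² + √(8K²βR²NÊ). -/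

import Mathlib

/-!
Each `f_n` satisfies the self-bounding inequality `‖f_n′(x)‖² ≤ 2β f_n(x)`: by the descent lemma,
`0 ≤ f_n(x + s v) ≤ f_n(x) + s f_n′(x) v + (β/2) s² ‖v‖²` for every `s`, so this quadratic in `s`
has nonpositive discriminant. Since the regret is at most the linearized regret `L`,
`Σ f_n(θ_n) ≤ L + N Ê`, hence `Σ ‖f_n′(θ_n)‖² ≤ 2β (L + N Ê)`. Choosing `η` in the adaptive
bound gives `L² ≤ 4K²βR² (L + N Ê)`, and solving this quadratic inequality in `L` gives the claim.
-/

open Finset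

/-- A differentiable function `f : E → ℝ` is CSN with smoothness `β` if it is convex,
non-negative, and its Fréchet derivative is `β`-Lipschitz in the operator (dual) norm. -/
def IsCSN {E : Type*} [NormedAddCommGroup E] [NormedSpace ℝ E]
    (f : E → ℝ) (β : ℝ) : Prop :=
  ConvexOn ℝ Set.univ f ∧ (∀ x, 0 ≤ f x) ∧ Differentiable ℝ f ∧
    ∀ x y, ‖fderiv ℝ f x - fderiv ℝ f y‖ ≤ β * ‖x - y‖

/-- `Regret(f_n) = Σ_{n=1}^N f_n(θ_n) − inf_{θ ∈ Θ} Σ_{n=1}^N f_n(θ)`. -/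
noncomputable def regret {E : Type*} (Θ : Set E) (N : ℕ)
    (f : ℕ → E → ℝ) (θ : ℕ → E) : ℝ :=
  (∑ n ∈ Finset.Icc 1 N, f n (θ n))
    - sInf ((fun x => ∑ n ∈ Finset.Icc 1 N, f n x) '' Θ)

/-- `Regret(⟨f_n′(θ_n), ·⟩) = Σ_{n=1}^N f_n′(θ_n)(θ_n) − inf_{θ ∈ Θ} Σ_{n=1}^N f_n′(θ_n)(θ)`. -/
noncomputable def linRegret {E : Type*} [NormedAddCommGroup E] [NormedSpace ℝ E]
    (Θ : Set E) (N : ℕ) (f : ℕ → E → ℝ) (θ : ℕ → E) : ℝ :=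
  (∑ n ∈ Finset.Icc 1 N, fderiv ℝ (f n) (θ n) (θ n))
    - sInf ((fun x => ∑ n ∈ Finset.Icc 1 N, fderiv ℝ (f n) (θ n) x) '' Θ)

section Smooth

variable {E : Type*} [NormedAddCommGroup E] [NormedSpace ℝ E] {f : E → ℝ} {β : ℝ}

theorem image_add_le_of_norm_fderiv_sub_le (hd : Differentiable ℝ f)
    (hL : ∀ x y, ‖fderiv ℝ f x - fderiv ℝ f y‖ ≤ β * ‖x - y‖) (x v : E) :
    f (x + v) ≤ f x + fderiv ℝ f x v + β / 2 * ‖v‖ ^ 2 := by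
  set L := fderiv ℝ f x
  let g : ℝ → ℝ := fun t => f (x + t • v) - t * L v - β / 2 * ‖v‖ ^ 2 * t ^ 2
  have hg : ∀ t, HasDerivAt g ((fderiv ℝ f (x + t • v) - L) v - β * ‖v‖ ^ 2 * t) t := by
    intro t
    have hline : HasDerivAt (fun t : ℝ => x + t • v) v t := by
      simpa using ((hasDerivAt_id t).smul_const v).const_add x
    refine ((((hd _).hasFDerivAt.comp_hasDerivAt t hline).sub
      ((hasDerivAt_id t).mul_const (L v))).sub
      ((hasDerivAt_pow 2 t).const_mul (β / 2 * ‖v‖ ^ 2))).congr_deriv ?_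
    simp only [FunLike.coe_sub, Pi.sub_apply, one_mul, Nat.cast_ofNat]
    ring
  have hanti : AntitoneOn g (Set.Icc 0 1) := by
    refine antitoneOn_of_deriv_nonpos (convex_Icc 0 1)
      (fun t _ => (hg t).continuousAt.continuousWithinAt)
      (fun t _ => (hg t).differentiableAt.differentiableWithinAt) fun t ht => ?_
    rw [interior_Icc] at ht
    rw [(hg t).deriv, sub_nonpos]
    calc (fderiv ℝ f (x + t • v) - L) v ≤ ‖fderiv ℝ f (x + t • v) - L‖ * ‖v‖ :=
          (le_abs_self _).trans ((fderiv ℝ f (x + t • v) - L).le_opNorm v)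
      _ ≤ β * ‖x + t • v - x‖ * ‖v‖ := by gcongr; exact hL _ _
      _ = β * ‖v‖ ^ 2 * t := by
          rw [add_sub_cancel_left, norm_smul, Real.norm_of_nonneg ht.1.le]; ring
  have h01 := hanti (Set.left_mem_Icc.2 zero_le_one) (Set.right_mem_Icc.2 zero_le_one) zero_le_one
  norm_num [g] at h01
  linarith

theorem sq_norm_fderiv_le_of_nonneg (hβ : 0 ≤ β) (hf : ∀ x, 0 ≤ f x) (hd : Differentiable ℝ f)
    (hL : ∀ x y, ‖fderiv ℝ f x - fderiv ℝ f y‖ ≤ β * ‖x - y‖) (x : E) :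
    ‖fderiv ℝ f x‖ ^ 2 ≤ 2 * β * f x := by
  have hfx := hf x
  have hdir : ∀ v, |fderiv ℝ f x v| ≤ √(2 * β * f x) * ‖v‖ := by
    intro v
    have hdisc := discrim_le_zero (a := β / 2 * ‖v‖ ^ 2) (b := fderiv ℝ f x v) (c := f x)
      fun s => by
        have := image_add_le_of_norm_fderiv_sub_le hd hL x (s • v)
        rw [map_smul, smul_eq_mul, norm_smul, Real.norm_eq_abs, mul_pow, sq_abs] at this
        linarith [hf (x + s • v)]
    rw [discrim] at hdisc
    rw [← Real.sqrt_sq (norm_nonneg v), ← Real.sqrt_mul (by positivity)]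
    exact Real.abs_le_sqrt (by linarith)
  have hnorm : ‖fderiv ℝ f x‖ ≤ √(2 * β * f x) :=
    ContinuousLinearMap.opNorm_le_bound _ (Real.sqrt_nonneg _) hdir
  calc ‖fderiv ℝ f x‖ ^ 2 ≤ √(2 * β * f x) ^ 2 := by gcongr
    _ = 2 * β * f x := Real.sq_sqrt (by positivity)

end Smooth

theorem sq_le_of_forall_le_div_add_mul {a A B : ℝ} (hA : 0 < A) (ha : 0 < a)
    (h : ∀ η > 0, a ≤ A / η + B * η) : a ^ 2 ≤ 4 * A * B := by
  have := h (2 * A / a) (by positivity)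
  have e : A / (2 * A / a) = a / 2 := by field_simp
  rw [e, mul_div_assoc'] at this
  have : a / 2 * a ≤ B * (2 * A) := (le_div_iff₀ ha).1 (by linarith)
  nlinarith

theorem le_add_sqrt_of_sq_le_mul_add {x b c : ℝ} (hb : 0 ≤ b)
    (h : x ^ 2 ≤ b * (x + c)) : x ≤ b + √(b * c) := by
  rcases le_or_gt x b with hxb | hxb
  · linarith [Real.sqrt_nonneg (b * c)]
  have : x - b ≤ √(b * c) := Real.le_sqrt_of_sq_le (by nlinarith)
  linarith

theorem bias_dependent_linearized_regret_adaptive_general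
    {E : Type*} [NormedAddCommGroup E] [NormedSpace ℝ E]
    (Θ : Set E)
    (N : ℕ) (hN : 1 ≤ N)
    (f : ℕ → E → ℝ) (β : ℝ) (hβ : 0 < β)
    (hCSN : ∀ n ∈ Finset.Icc 1 N, IsCSN (f n) β)
    (θ : ℕ → E)
    (εhat Ehat R K : ℝ)
    (hεhat : εhat = (1 / (N : ℝ)) * sInf ((fun x => ∑ n ∈ Finset.Icc 1 N, f n x) '' Θ))
    (hEhat : εhat ≤ Ehat)
    (hR : 0 < R) (hK : 0 < K)
    (hreg : ∀ η : ℝ, 0 < η →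
        regret Θ N f θ ≤ linRegret Θ N f θ ∧
        linRegret Θ N f θ
          ≤ K * (R ^ 2 / η + (η / 2) * ∑ n ∈ Finset.Icc 1 N, ‖fderiv ℝ (f n) (θ n)‖ ^ 2)) :
    linRegret Θ N f θ ≤ 8 * K ^ 2 * β * R ^ 2
      + Real.sqrt (8 * K ^ 2 * β * R ^ 2 * N * Ehat) := by
  set L := linRegret Θ N f θ
  set I := sInf ((fun x => ∑ n ∈ Finset.Icc 1 N, f n x) '' Θ)
  set S := ∑ n ∈ Finset.Icc 1 N, ‖fderiv ℝ (f n) (θ n)‖ ^ 2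
  have hIE : I ≤ N * Ehat := by
    have hN' : (0 : ℝ) < N := by exact_mod_cast hN
    have : I = N * εhat := by rw [hεhat]; field_simp
    rw [this]; gcongr
  have hFL : ∑ n ∈ Icc 1 N, f n (θ n) ≤ L + I := by
    have := (hreg 1 one_pos).1; rw [regret] at this; linarith
  have hS : S ≤ 2 * β * (L + N * Ehat) := by
    calc S ≤ ∑ n ∈ Icc 1 N, 2 * β * f n (θ n) := sum_le_sum fun n hn =>
          let ⟨_, hnn, hd, hL⟩ := hCSN n hn; sq_norm_fderiv_le_of_nonneg hβ.le hnn hd hL (θ n)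
      _ ≤ 2 * β * (L + N * Ehat) := by rw [← mul_sum]; gcongr; linarith
  rcases le_or_gt L 0 with hL | hL
  · linarith [Real.sqrt_nonneg (8 * K ^ 2 * β * R ^ 2 * N * Ehat),
      (by positivity : 0 ≤ 8 * K ^ 2 * β * R ^ 2)]
  have hsq := sq_le_of_forall_le_div_add_mul (A := K * R ^ 2) (B := K * β * (L + N * Ehat))
    (by positivity) hL fun η hη => calc
      L ≤ K * (R ^ 2 / η + η / 2 * S) := (hreg η hη).2
      _ ≤ K * (R ^ 2 / η + η / 2 * (2 * β * (L + N * Ehat))) := by gcongr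
      _ = K * R ^ 2 / η + K * β * (L + N * Ehat) * η := by ring
  have := le_add_sqrt_of_sq_le_mul_add (x := L) (b := 8 * K ^ 2 * β * R ^ 2) (c := N * Ehat)
    (by positivity) (by nlinarith [sq_nonneg L])
  rwa [← mul_assoc] at this

/-- Lemma E.3: bias-dependent linearized-regret bound under proper adaptive stepsizes,
encoded as the regret bounds holding for every `η > 0` up to a multiplicative factor `K`. -/
theorem bias_dependent_linearized_regret_adaptive
    {E : Type*} [NormedAddCommGroup E] [NormedSpace ℝ E]
    (Θ : Set E) (hne : Θ.Nonempty) (hcl : IsClosed Θ) (hcv : Convex ℝ Θ)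
    (N : ℕ) (hN : 1 ≤ N)
    (f : ℕ → E → ℝ) (β : ℝ) (hβ : 0 < β)
    (hCSN : ∀ n ∈ Finset.Icc 1 N, IsCSN (f n) β)
    (θ : ℕ → E) (hθ : ∀ n ∈ Finset.Icc 1 N, θ n ∈ Θ)
    (εhat Ehat R K : ℝ)
    (hεhat : εhat = (1 / (N : ℝ)) * sInf ((fun x => ∑ n ∈ Finset.Icc 1 N, f n x) '' Θ))
    (hEhat : εhat ≤ Ehat)
    (hR : 0 < R) (hK : 0 < K)
    (hreg : ∀ η : ℝ, 0 < η →
        regret Θ N f θ ≤ linRegret Θ N f θ ∧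
        linRegret Θ N f θ
          ≤ K * (R ^ 2 / η + (η / 2) * ∑ n ∈ Finset.Icc 1 N, ‖fderiv ℝ (f n) (θ n)‖ ^ 2)) :
    linRegret Θ N f θ ≤ 8 * K ^ 2 * β * R ^ 2
      + Real.sqrt (8 * K ^ 2 * β * R ^ 2 * N * Ehat) :=
  bias_dependent_linearized_regret_adaptive_general Θ N hN f β hβ hCSN θ εhat Ehat R K hεhat hEhat
    hR hK hreg
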